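/- arXiv:1307.2007 — 2 statements merged into one kernel-verified Lean document; each statement's English description precedes it below -/
import Mathlib

section
/- For every two integers n and k with 2 ≤ k ≤ n, the generalized k-connectivity of the complete graph K_n equals n − ⌈k/2⌉. -/
open SimpleGraph

/-- An `S`-Steiner tree in `G`: a subgraph that is a tree and contains `S`. -/
def IsSteinerTree {V : Type*} (G : SimpleGraph V) (S : Set V) (T : G.Subgraph) : Prop :=
  T.coe.IsTree ∧ S ⊆ T.verts

/-- Two `S`-trees are internally disjoint: edge-disjoint and meeting exactly in `S`. -/
def IntDisjoint {V : Type*} (S : Set V) {G : SimpleGraph V} (T₁ T₂ : G.Subgraph) : Prop :=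
  T₁.verts ∩ T₂.verts = S ∧ ∀ u v, ¬ (T₁.Adj u v ∧ T₂.Adj u v)

/-- `κ(S)`: the maximum number of pairwise internally disjoint `S`-Steiner trees. -/
noncomputable def steinerConn {V : Type*} (G : SimpleGraph V) (S : Set V) : ℕ :=
  sSup {n | ∃ f : Fin n → G.Subgraph,
    (∀ i, IsSteinerTree G S (f i)) ∧ ∀ i j, i ≠ j → IntDisjoint S (f i) (f j)}

/-- The generalized `k`-connectivity `κ_k(G)`. -/
noncomputable def genConn {V : Type*} (G : SimpleGraph V) (k : ℕ) : ℕ :=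
  sInf {c | ∃ S : Set V, S.ncard = k ∧ steinerConn G S = c}

/-- `G` is `k`-connected: more than `k` vertices, and removing fewer than `k`
vertices leaves it connected. -/
def KConnected {V : Type*} (G : SimpleGraph V) (k : ℕ) : Prop :=
  k < Nat.card V ∧ ∀ s : Set V, s.Finite → s.ncard < k → (G.induce sᶜ).Connected

/-- The vertex connectivity `κ(G)`. -/
noncomputable def vconn {V : Type*} (G : SimpleGraph V) : ℕ :=
  sSup {k | KConnected G k}

/-- The lexicographic product `G ∘ H`. -/
def lexProd {V W : Type*} (G : SimpleGraph V) (H : SimpleGraph W) : SimpleGraph (V × W) where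
  Adj a b := G.Adj a.1 b.1 ∨ (a.1 = b.1 ∧ H.Adj a.2 b.2)
  symm := by
    constructor
    intro a b h
    rcases h with h | ⟨h1, h2⟩
    · exact Or.inl h.symm
    · exact Or.inr ⟨h1.symm, h2.symm⟩
  loopless := by
    constructor
    intro a h
    rcases h with h | ⟨_, h2⟩
    · exact G.irrefl h
    · exact H.irrefl h2

/-- The star `K_{1,m}` on `m + 1` vertices: center `none`, leaves `some i`. -/
def starGraph (m : ℕ) : SimpleGraph (Option (Fin m)) where
  Adj u v := u ≠ v ∧ (u = none ∨ v = none)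
  symm := by constructor; intro u v ⟨h1, h2⟩; exact ⟨h1.symm, h2.symm⟩
  loopless := by constructor; intro u ⟨h1, _⟩; exact h1 rfl

/-!
Let `S` be a `k`-set of vertices of `K_n` and consider internally disjoint `S`-trees. Each tree
whose vertex set is larger than `S` owns a vertex outside `S`, so there are at most `n - k` of
them; the others are edge-disjoint spanning trees of `K_S`, each with `k - 1` of its `k(k-1)/2`
edges, so there are at most `⌊k/2⌋` of them. Conversely, the stars centred at the `n - k` vertices
outside `S` together with `⌊k/2⌋` edge-disjoint double stars on `S` give
`n - k + ⌊k/2⌋ = n - ⌈k/2⌉` such trees.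
-/

theorem Set.ncard_mul_le_ncard_of_pairwiseDisjoint {ι α : Type*} {A : Set ι} (hA : A.Finite)
    {s : ι → Set α} {t : Set α} (ht : t.Finite) (hst : ∀ i ∈ A, s i ⊆ t)
    (hdisj : A.PairwiseDisjoint s) {a : ℕ} (hs : ∀ i ∈ A, (s i).ncard = a) :
    A.ncard * a ≤ t.ncard :=
  calc A.ncard * a = ∑ᶠ i ∈ A, (s i).ncard := by
        rw [finsum_mem_congr rfl hs, finsum_mem_eq_finite_toFinset_sum _ hA, Finset.sum_const,
          smul_eq_mul, Set.ncard_eq_toFinset_card _ hA]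
    _ = (⋃ i ∈ A, s i).ncard := (hA.ncard_biUnion (fun i hi => ht.subset (hst i hi)) hdisj).symm
    _ ≤ t.ncard := Set.ncard_le_ncard (Set.iUnion₂_subset hst) ht

theorem Set.ncard_setOf_ne_le_ncard_compl {α ι : Type*} [Finite α] {S : Set α} {s : ι → Set α}
    (hS : ∀ i, S ⊆ s i) (hinter : Pairwise fun i j => s i ∩ s j = S) :
    {i | s i ≠ S}.ncard ≤ Sᶜ.ncard := by
  have hout : ∀ i ∈ {i | s i ≠ S}, ∃ v ∈ s i, v ∉ S := fun i hi =>
    Set.not_subset.mp fun h => hi (h.antisymm (hS i))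
  choose w hw hwS using hout
  refine Nat.card_le_card_of_injective (fun i => (⟨w i i.2, hwS i i.2⟩ : ↥Sᶜ))
    fun i j hij => Subtype.ext (not_not.mp fun hne => hwS i i.2 ?_)
  have hij : w i i.2 = w j j.2 := congrArg Subtype.val hij
  exact (hinter hne).subset ⟨hw i i.2, hij ▸ hw j j.2⟩

theorem IntDisjoint.symm {V : Type*} {S : Set V} {G : SimpleGraph V} {T₁ T₂ : G.Subgraph}
    (h : IntDisjoint S T₁ T₂) : IntDisjoint S T₂ T₁ :=
  ⟨Set.inter_comm T₂.verts T₁.verts ▸ h.1, fun u v huv => h.2 u v huv.symm⟩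

theorem intDisjoint_of_forall_adj_eq_or_eq {V : Type*} {S : Set V} {G : SimpleGraph V}
    {T₁ T₂ : G.Subgraph} {c : V} (hverts : T₁.verts ∩ T₂.verts = S) (hc : c ∉ T₂.verts)
    (hT₁ : ∀ ⦃u v⦄, T₁.Adj u v → u = c ∨ v = c) : IntDisjoint S T₁ T₂ :=
  ⟨hverts, fun _ _ ⟨h₁, h₂⟩ => (hT₁ h₁).elim (fun hu => hc (hu ▸ h₂.fst_mem))
    (fun hv => hc (hv ▸ h₂.snd_mem))⟩

namespace SimpleGraph

variable {V ι : Type*}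

theorem isAcyclic_of_rank {α : Type*} [LinearOrder α] {G : SimpleGraph V} (ρ : V → α)
    (hne : ∀ ⦃a b⦄, G.Adj a b → ρ a ≠ ρ b)
    (hlower : ∀ ⦃a b c⦄, G.Adj a b → G.Adj a c → ρ b < ρ a → ρ c < ρ a → b = c) :
    G.IsAcyclic := by
  classical
  -- a vertex of maximal rank on a cycle would have two distinct lower neighbours on it
  intro v c hc
  obtain ⟨m, hm, hmax⟩ := c.support.toFinset.exists_max_image ρ ⟨v, by simp⟩
  rw [List.mem_toFinset] at hm
  have hc' := hc.rotate hm
  have hnil := hc'.not_nil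
  have hlt : ∀ x ∈ (c.rotate m hm).support, G.Adj m x → ρ x < ρ m := fun x hx hadj =>
    (hmax x (by simpa using (c.mem_support_rotate_iff m hm).mp hx)).lt_of_ne (hne hadj).symm
  have hsnd := Walk.adj_snd hnil
  have hpen := (Walk.adj_penultimate hnil).symm
  exact hc'.snd_ne_penultimate <| hlower hsnd hpen (hlt _ (Walk.getVert_mem_support _ _) hsnd)
    (hlt _ (Walk.getVert_mem_support _ _) hpen)

def parentSubgraph (g : ι → V) (r : ι) (q : ι → ι) : (⊤ : SimpleGraph V).Subgraph where
  verts := Set.range g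
  Adj u v := u ≠ v ∧ ∃ i ≠ r, s(u, v) = s(g i, g (q i))
  adj_sub h := h.1
  edge_vert := by
    rintro u v ⟨-, i, -, h⟩
    rcases Sym2.mem_iff.mp (h ▸ Sym2.mem_mk_left u v) with rfl | rfl <;> exact ⟨_, rfl⟩
  symm := ⟨fun _ _ ⟨hne, i, hi, h⟩ => ⟨hne.symm, i, hi, Sym2.eq_swap.trans h⟩⟩

theorem parentSubgraph_verts (g : ι → V) (r : ι) (q : ι → ι) :
    (parentSubgraph g r q).verts = Set.range g := rfl

theorem parentSubgraph_adj {g : ι → V} {r : ι} {q : ι → ι} {u v : V} :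
    (parentSubgraph g r q).Adj u v ↔ u ≠ v ∧ ∃ i ≠ r, s(u, v) = s(g i, g (q i)) := Iff.rfl

theorem isTree_parentSubgraph {g : ι → V} (hg : g.Injective) {r : ι} {q : ι → ι} (ρ : ι → ℕ)
    (hρ : ∀ i ≠ r, ρ (q i) < ρ i) : (parentSubgraph g r q).coe.IsTree := by
  set T := parentSubgraph g r q
  let vert (i : ι) : T.verts := ⟨g i, Set.mem_range_self i⟩
  have hadj : ∀ {x y : T.verts}, T.coe.Adj x y ↔
      x ≠ y ∧ ∃ i ≠ r, (x = vert i ∧ y = vert (q i)) ∨ (x = vert (q i) ∧ y = vert i) := by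
    intro x y
    simp only [Subgraph.coe_adj, T, parentSubgraph_adj, Sym2.eq_iff, ne_eq, Subtype.ext_iff]
    rfl
  constructor
  · refine (connected_iff_exists_forall_reachable _).mpr ⟨vert r, ?_⟩
    rintro ⟨_, i, rfl⟩
    induction i using (measure ρ).wf.induction with
    | _ i ih =>
      by_cases hi : i = r
      · exact hi ▸ Reachable.refl _
      · refine (ih (q i) (hρ i hi)).trans (hadj.mpr ⟨?_, i, hi, Or.inr ⟨rfl, rfl⟩⟩).reachable
        exact fun h => (hρ i hi).ne (congrArg ρ (hg (congrArg Subtype.val h)))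
  · have : Nonempty ι := ⟨r⟩
    let rank (x : T.verts) : ℕ := ρ (Function.invFun g x)
    have hrank : ∀ i, Function.invFun g (vert i) = i := Function.leftInverse_invFun hg
    have hlower : ∀ {x y : T.verts}, T.coe.Adj x y → rank y < rank x →
        y = vert (q (Function.invFun g x)) := by
      intro x y hxy hlt
      obtain ⟨-, i, hi, ⟨rfl, rfl⟩ | ⟨rfl, rfl⟩⟩ := hadj.mp hxy
      · rw [hrank]
      · simp only [rank, hrank] at hlt
        exact absurd (hρ i hi) hlt.not_gt
    refine isAcyclic_of_rank rank (fun x y hxy => ?_) fun x y z hxy hxz hy hz => ?_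
    · obtain ⟨-, i, hi, ⟨rfl, rfl⟩ | ⟨rfl, rfl⟩⟩ := hadj.mp hxy
      · simpa only [rank, hrank] using (hρ i hi).ne'
      · simpa only [rank, hrank] using (hρ i hi).ne
    · rw [hlower hxy hy, hlower hxz hz]

def starSubgraph (S : Set V) (c : V) : (⊤ : SimpleGraph V).Subgraph :=
  parentSubgraph (fun o : Option S => o.elim c Subtype.val) none (fun _ => none)

theorem starSubgraph_verts (S : Set V) (c : V) : (starSubgraph S c).verts = insert c S := by
  ext x
  constructor
  · rintro ⟨_ | y, rfl⟩
    exacts [Set.mem_insert _ _, Set.mem_insert_of_mem _ y.2]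
  · rintro (rfl | hx)
    exacts [⟨none, rfl⟩, ⟨some ⟨x, hx⟩, rfl⟩]

theorem isTree_starSubgraph {S : Set V} {c : V} (hc : c ∉ S) : (starSubgraph S c).coe.IsTree := by
  refine isTree_parentSubgraph ?_ (fun o => o.elim 0 fun _ => 1) ?_
  · rintro (_ | x) (_ | y) h
    · rfl
    · exact absurd ((show c = y from h) ▸ y.2) hc
    · exact absurd ((show x = c from h) ▸ x.2) hc
    · exact congrArg some (Subtype.ext h)
  · rintro (_ | x) h
    · exact absurd rfl h
    · exact zero_lt_one

theorem eq_or_eq_of_starSubgraph_adj {S : Set V} {c u v : V} (h : (starSubgraph S c).Adj u v) :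
    u = c ∨ v = c := by
  obtain ⟨-, _, -, h⟩ := h
  exact (Sym2.mem_iff.mp (h ▸ Sym2.mem_mk_right _ c)).imp Eq.symm Eq.symm

theorem intDisjoint_starSubgraph {S : Set V} {c : V} {T : (⊤ : SimpleGraph V).Subgraph}
    (hS : S ⊆ T.verts) (hc : c ∉ T.verts) : IntDisjoint S (starSubgraph S c) T :=
  intDisjoint_of_forall_adj_eq_or_eq
    (by rw [starSubgraph_verts, Set.insert_inter_of_notMem hc, Set.inter_eq_left.mpr hS]) hc
    fun _ _ h => eq_or_eq_of_starSubgraph_adj h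

def doubleStarRoot {k : ℕ} (j : Fin (k / 2)) : Fin k := ⟨2 * j, by omega⟩

/-- In the `j`-th double star on `Fin k` the centres `2j` and `2j + 1` are adjacent, and every
other vertex `i` hangs off the centre of the parity of `i`, flipped when the pair `⌊i/2⌋` precedes
`j`. The flip is what makes the double stars edge-disjoint. -/
def doubleStarParent {k : ℕ} (j : Fin (k / 2)) (i : Fin k) : Fin k :=
  if i.val / 2 = j then doubleStarRoot j
  else ⟨2 * j + (i + if i.val / 2 < j then 1 else 0) % 2, by omega⟩

theorem doubleStarParent_val {k : ℕ} (j : Fin (k / 2)) (i : Fin k) :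
    (doubleStarParent j i).val = if i.val / 2 = j.val then 2 * j.val
      else 2 * j.val + (i.val + if i.val / 2 < j.val then 1 else 0) % 2 := by
  unfold doubleStarParent
  split_ifs <;> rfl

def doubleStarRank {k : ℕ} (j : Fin (k / 2)) (i : Fin k) : ℕ :=
  if i.val = 2 * j then 0 else if i.val = 2 * j + 1 then 1 else 2

theorem doubleStarRank_parent_lt {k : ℕ} (j : Fin (k / 2)) {i : Fin k}
    (hi : i ≠ doubleStarRoot j) : doubleStarRank j (doubleStarParent j i) < doubleStarRank j i := by
  have hi : i.val ≠ 2 * j := fun h => hi (Fin.ext h)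
  simp only [doubleStarRank, doubleStarParent_val]
  split_ifs <;> omega

theorem mk_doubleStarParent_ne {k : ℕ} {j j' : Fin (k / 2)} (hj : j ≠ j') {i i' : Fin k}
    (hi : i ≠ doubleStarRoot j) (hi' : i' ≠ doubleStarRoot j') :
    s(i, doubleStarParent j i) ≠ s(i', doubleStarParent j' i') := by
  have hj : j.val ≠ j' := Fin.val_ne_iff.mpr hj
  have hi : i.val ≠ 2 * j := fun h => hi (Fin.ext h)
  have hi' : i'.val ≠ 2 * j' := fun h => hi' (Fin.ext h)
  simp only [ne_eq, Sym2.eq_iff, Fin.ext_iff, doubleStarParent_val]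
  split_ifs <;> omega

def doubleStar {k : ℕ} (σ : Fin k → V) (j : Fin (k / 2)) : (⊤ : SimpleGraph V).Subgraph :=
  parentSubgraph σ (doubleStarRoot j) (doubleStarParent j)

theorem isTree_doubleStar {k : ℕ} {σ : Fin k → V} (hσ : σ.Injective) (j : Fin (k / 2)) :
    (doubleStar σ j).coe.IsTree :=
  isTree_parentSubgraph hσ _ fun _ => doubleStarRank_parent_lt j

theorem doubleStar_edge_disjoint {k : ℕ} {σ : Fin k → V} (hσ : σ.Injective)
    {j j' : Fin (k / 2)} (hj : j ≠ j') (u v : V) :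
    ¬ ((doubleStar σ j).Adj u v ∧ (doubleStar σ j').Adj u v) := by
  rintro ⟨⟨-, i, hi, h⟩, ⟨-, i', hi', h'⟩⟩
  refine mk_doubleStarParent_ne hj hi hi' (Sym2.map.injective hσ ?_)
  simp only [Sym2.map_mk, ← h, ← h']

theorem exists_fin_steinerFamily {G : SimpleGraph V} {S : Set V} [Finite ι]
    (F : ι → G.Subgraph) (htree : ∀ a, IsSteinerTree G S (F a))
    (hdisj : Pairwise fun a b => IntDisjoint S (F a) (F b)) :
    ∃ f : Fin (Nat.card ι) → G.Subgraph,
      (∀ i, IsSteinerTree G S (f i)) ∧ ∀ i j, i ≠ j → IntDisjoint S (f i) (f j) :=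
  ⟨F ∘ (Finite.equivFin ι).symm, fun _ => htree _,
    fun _ _ hij => hdisj ((Finite.equivFin ι).symm.injective.ne hij)⟩

theorem exists_steinerFamily_top [Finite V] (S : Set V) :
    ∃ f : Fin (Sᶜ.ncard + S.ncard / 2) → (⊤ : SimpleGraph V).Subgraph,
      (∀ i, IsSteinerTree ⊤ S (f i)) ∧ ∀ i j, i ≠ j → IntDisjoint S (f i) (f j) := by
  let e : S ≃ Fin S.ncard := Finite.equivFin S
  let σ : Fin S.ncard → V := fun i => e.symm i
  have hσ : σ.Injective := Subtype.val_injective.comp e.symm.injective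
  have hσS : Set.range σ = S := by
    change Set.range (Subtype.val ∘ e.symm) = S
    rw [Set.range_comp, e.symm.range_eq_univ, Set.image_univ, Subtype.range_coe]
  let F : ↥(Sᶜ) ⊕ Fin (S.ncard / 2) → (⊤ : SimpleGraph V).Subgraph :=
    Sum.elim (fun c => starSubgraph S c) (doubleStar σ)
  have htree : ∀ a, IsSteinerTree ⊤ S (F a)
    | .inl c => ⟨isTree_starSubgraph c.2, by simp [F, starSubgraph_verts, Set.subset_insert]⟩
    | .inr j => ⟨isTree_doubleStar hσ j, by simp [F, doubleStar, parentSubgraph_verts, hσS]⟩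
  have hstar : ∀ (c : ↥(Sᶜ)) b, Sum.inl c ≠ b → IntDisjoint S (F (.inl c)) (F b) := by
    rintro ⟨c, hc⟩ b hb
    refine intDisjoint_starSubgraph (htree b).2 ?_
    rcases b with ⟨c', _⟩ | j
    · have hcc' : c ≠ c' := fun h => hb (by simp [h])
      simpa [F, starSubgraph_verts, hcc'] using hc
    · simpa [F, doubleStar, parentSubgraph_verts, hσS] using hc
  have hdisj : Pairwise fun a b => IntDisjoint S (F a) (F b) := by
    rintro (c | j) b hab
    · exact hstar c b hab
    · rcases b with c | j'
      · exact (hstar c _ hab.symm).symm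
      · refine ⟨?_, doubleStar_edge_disjoint hσ fun h => hab (congrArg Sum.inr h)⟩
        simp only [F, Sum.elim_inr, doubleStar, parentSubgraph_verts, hσS, Set.inter_self]
  have hcard : Nat.card (↥(Sᶜ) ⊕ Fin (S.ncard / 2)) = Sᶜ.ncard + S.ncard / 2 := by
    rw [Nat.card_sum, Nat.card_coe_set_eq, Nat.card_fin]
  exact hcard ▸ exists_fin_steinerFamily F htree hdisj

theorem Subgraph.ncard_edgeSet_add_one_of_isTree [Finite V] {G : SimpleGraph V} {T : G.Subgraph}
    (hT : T.coe.IsTree) : T.edgeSet.ncard + 1 = T.verts.ncard := by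
  have h := (isTree_iff_connected_and_card.mp hT).2
  rwa [← Subgraph.image_coe_edgeSet_coe,
    Set.ncard_image_of_injective _ (Sym2.map.injective Subtype.val_injective)]

theorem Subgraph.edgeSet_subset_image_diagSet_compl {G : SimpleGraph V} {T : G.Subgraph}
    {S : Set V} (hT : T.verts ⊆ S) :
    T.edgeSet ⊆ Sym2.map Subtype.val '' (Sym2.diagSet : Set (Sym2 S))ᶜ := by
  rintro ⟨u, v⟩ huv
  refine ⟨s(⟨u, hT (T.edge_vert huv)⟩, ⟨v, hT (T.edge_vert huv.symm)⟩), ?_, rfl⟩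
  simpa using (T.adj_sub huv).ne

theorem steinerFamily_card_le [Finite V] {G : SimpleGraph V} {S : Set V} (hS : 2 ≤ S.ncard)
    {m : ℕ} {f : Fin m → G.Subgraph} (htree : ∀ i, IsSteinerTree G S (f i))
    (hdisj : ∀ i j, i ≠ j → IntDisjoint S (f i) (f j)) : m ≤ Sᶜ.ncard + S.ncard / 2 := by
  set A := {i | (f i).verts = S}
  have hAc : Aᶜ.ncard ≤ Sᶜ.ncard :=
    Set.ncard_setOf_ne_le_ncard_compl (fun i => (htree i).2) fun i j hij => (hdisj i j hij).1
  have hA : A.ncard * (S.ncard - 1) ≤ S.ncard * (S.ncard - 1) / 2 := by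
    rw [← Nat.choose_two_right, ← Nat.card_coe_set_eq S, ← Sym2.ncard_diagSet_compl,
      ← Set.ncard_image_of_injective _ (Sym2.map.injective Subtype.val_injective)]
    refine Set.ncard_mul_le_ncard_of_pairwiseDisjoint A.toFinite (Set.toFinite _)
      (fun i hi => Subgraph.edgeSet_subset_image_diagSet_compl hi.le) ?_ fun i hi => ?_
    · intro i _ j _ hij
      rw [Function.onFun, Set.disjoint_left]
      rintro ⟨u, v⟩ h₁ h₂
      exact (hdisj i j hij).2 u v ⟨h₁, h₂⟩
    · have := Subgraph.ncard_edgeSet_add_one_of_isTree (htree i).1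
      rw [hi] at this
      rw [Nat.card_coe_set_eq]
      omega
  have hAAc : A.ncard + Aᶜ.ncard = m := by
    rw [Set.ncard_add_ncard_compl, Nat.card_fin]
  have h2A : 2 * A.ncard ≤ S.ncard := by
    refine Nat.le_of_mul_le_mul_right ?_ (by omega : 0 < S.ncard - 1)
    rw [mul_assoc]
    omega
  omega

theorem steinerConn_top [Finite V] {S : Set V} (hS : 2 ≤ S.ncard) :
    steinerConn (⊤ : SimpleGraph V) S = Sᶜ.ncard + S.ncard / 2 :=
  IsGreatest.csSup_eq ⟨exists_steinerFamily_top S,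
    fun _ ⟨_, htree, hdisj⟩ => steinerFamily_card_le hS htree hdisj⟩

end SimpleGraph

/-- Chartrand et al.: `κ_k(K_n) = n - ⌈k/2⌉`. -/
theorem genConn_completeGraph (n k : ℕ) (hk : 2 ≤ k) (hkn : k ≤ n) :
    genConn (⊤ : SimpleGraph (Fin n)) k = n - (k + 1) / 2 := by
  have hconn : ∀ S : Set (Fin n), S.ncard = k → steinerConn ⊤ S = n - (k + 1) / 2 := by
    intro S hS
    rw [steinerConn_top (hS ▸ hk), Set.ncard_compl, Nat.card_fin, hS]
    omega
  obtain ⟨S, -, hS⟩ := Set.exists_subset_card_eq (s := (Set.univ : Set (Fin n))) (by simpa)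
  have hvalues :
      {c | ∃ S : Set (Fin n), S.ncard = k ∧ steinerConn ⊤ S = c} = {n - (k + 1) / 2} :=
    Set.eq_singleton_iff_unique_mem.mpr
      ⟨⟨S, hS, hconn S hS⟩, fun _ ⟨S', hS', hc⟩ => hc ▸ hconn S' hS'⟩
  rw [genConn, hvalues, csInf_singleton]
end

section
/- For n ≥ 4, κ₃(P_n ∘ P₃) = 3, where P_n is the path on n vertices and ∘ is the lexicographic product. -/
open SimpleGraph

/-!
Write the vertices of `P_n ∘ P₃` as pairs (column, row). Since `n ≥ 4`, every 3-set `S` misses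
some column `c`. For each row `w`, join every vertex of row `w` or of `S` outside column `c` to
the vertex of row `w` one step closer to column `c`: this is a tree containing `S`, the three
trees meet exactly in `S`, and they share no edge because two columns outside `c` never step onto
each other. Conversely, every Steiner tree of `S = {(0,0), (0,1), (2,0)}` passes through
column `1`, which avoids `S` and has only three vertices, so `S` carries at most three internally
disjoint trees.
-/

namespace SimpleGraph

variable {V : Type*} {G : SimpleGraph V}

lemma Walk.exists_mem_support_eq_of_adj_le_succ {f : V → ℕ}
    (hf : ∀ ⦃u v⦄, G.Adj u v → f v ≤ f u + 1) {k : ℕ} {x y : V} (p : G.Walk x y)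
    (hx : f x ≤ k) (hy : k ≤ f y) : ∃ z ∈ p.support, f z = k := by
  induction p with
  | nil => exact ⟨_, List.mem_singleton_self _, by omega⟩
  | @cons u v w huv q ih =>
    by_cases hu : f u = k
    · exact ⟨u, List.mem_cons_self .., hu⟩
    · obtain ⟨z, hz, hzk⟩ := ih (by have := hf huv; omega) hy
      exact ⟨z, List.mem_cons_of_mem _ hz, hzk⟩

theorem isTree_of_parent (root : V) (parent : V → V) (rank : V → ℕ)
    (hadj : ∀ x ≠ root, G.Adj x (parent x)) (hrank : ∀ x ≠ root, rank (parent x) < rank x)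
    (hedge : ∀ ⦃x y⦄, G.Adj x y → (x ≠ root ∧ y = parent x) ∨ (y ≠ root ∧ x = parent y)) :
    G.IsTree where
  connected := by
    refine (connected_iff_exists_forall_reachable G).mpr ⟨root, fun x => ?_⟩
    induction hx : rank x using Nat.strong_induction_on generalizing x with
    | _ k ih =>
      by_cases hroot : x = root
      · exact hroot ▸ Reachable.refl _
      · exact (ih _ (hx ▸ hrank x hroot) _ rfl).trans
          (hadj x hroot).symm.reachable
  isAcyclic := by
    classical
    intro v c hc
    obtain ⟨w, hw, hmax⟩ := c.support.toFinset.exists_max_image rank ⟨v, by simp⟩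
    rw [List.mem_toFinset] at hw
    set c' := c.rotate w hw
    have hc' : c'.IsCycle := hc.rotate hw
    -- both neighbours of a vertex of maximal rank on the cycle must be its parent
    have to_parent : ∀ y ∈ c'.support, G.Adj w y → y = parent w := by
      intro y hy hwy
      rcases hedge hwy with ⟨-, h⟩ | ⟨hy_root, hw_parent⟩
      · exact h
      · have := hmax y (List.mem_toFinset.mpr ((c.mem_support_rotate_iff w hw).mp hy))
        have := hrank y hy_root
        rw [← hw_parent] at this
        omega
    apply hc'.snd_ne_penultimate
    rw [to_parent c'.snd (c'.getVert_mem_support _) (c'.adj_snd hc'.not_nil),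
      to_parent c'.penultimate (c'.getVert_mem_support _) (c'.adj_penultimate hc'.not_nil).symm]

end SimpleGraph

section SteinerPacking

variable {V : Type*} {G : SimpleGraph V} {S : Set V}

def IsSteinerPacking (G : SimpleGraph V) (S : Set V) {ι : Type*} (f : ι → G.Subgraph) : Prop :=
  (∀ i, IsSteinerTree G S (f i)) ∧ ∀ i j, i ≠ j → IntDisjoint S (f i) (f j)

lemma IsSteinerTree.exists_mem_edgeSet {T : G.Subgraph} (hT : IsSteinerTree G S T)
    (hS : S.Nontrivial) : ∃ e, e ∈ T.edgeSet := by
  have : Nontrivial T.verts := (hS.mono hT.2).coe_sort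
  obtain ⟨x, hx⟩ := hS.nonempty
  obtain ⟨y, hxy⟩ := hT.1.connected.preconnected.exists_adj_of_nontrivial ⟨x, hT.2 hx⟩
  exact ⟨s(x, y), hxy⟩

lemma IsSteinerPacking.le_card_sym2 [Finite V] (hS : S.Nontrivial) {k : ℕ}
    {f : Fin k → G.Subgraph} (hf : IsSteinerPacking G S f) : k ≤ Nat.card (Sym2 V) := by
  choose e he using fun i => (hf.1 i).exists_mem_edgeSet hS
  have he_inj : Function.Injective e := by
    intro i j hij
    by_contra hne
    have hei := he i
    have hej := he j
    rw [← hij] at hej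
    generalize e i = ε at hei hej
    induction ε using Sym2.ind with
    | _ x y => exact (hf.2 i j hne).2 x y ⟨hei, hej⟩
  simpa using Nat.card_le_card_of_injective e he_inj

lemma IsSteinerPacking.le_steinerConn [Finite V] (hS : S.Nontrivial) {k : ℕ}
    {f : Fin k → G.Subgraph} (hf : IsSteinerPacking G S f) : k ≤ steinerConn G S :=
  le_csSup ⟨Nat.card (Sym2 V), fun _ ⟨_, hg⟩ => IsSteinerPacking.le_card_sym2 hS hg⟩
    ⟨f, hf⟩

/-- Internally disjoint trees meet a set `C` avoiding `S` in distinct vertices. -/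
lemma steinerConn_le_ncard {C : Set V} (hC : C.Finite) (hSC : Disjoint S C)
    (hmeet : ∀ T, IsSteinerTree G S T → (T.verts ∩ C).Nonempty) :
    steinerConn G S ≤ C.ncard := by
  refine csSup_le ⟨0, fun i => i.elim0, fun i => i.elim0, fun i => i.elim0⟩ ?_
  rintro k ⟨f, hf, hdisj⟩
  choose g hg using fun i => hmeet (f i) (hf i)
  have hg_inj : Function.Injective fun i => (⟨g i, (hg i).2⟩ : C) := by
    intro i j hij
    by_contra hne
    have hgij : g i = g j := congrArg Subtype.val hij
    have hgS : g i ∈ S := (hdisj i j hne).1 ▸ ⟨(hg i).1, hgij ▸ (hg j).1⟩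
    exact hSC.notMem_of_mem_left hgS (hg i).2
  have := hC.to_subtype
  simpa [Nat.card_coe_set_eq] using Nat.card_le_card_of_injective _ hg_inj

lemma genConn_eq_of_le_steinerConn {k m : ℕ}
    (hle : ∀ S : Set V, S.ncard = k → m ≤ steinerConn G S) {S₀ : Set V} (hS₀ : S₀.ncard = k)
    (h₀ : steinerConn G S₀ ≤ m) : genConn G k = m := by
  have hmem : steinerConn G S₀ ∈ {c | ∃ S : Set V, S.ncard = k ∧ steinerConn G S = c} :=
    ⟨S₀, hS₀, rfl⟩
  refine le_antisymm ((Nat.sInf_le hmem).trans h₀) (le_csInf ⟨_, hmem⟩ ?_)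
  rintro _ ⟨S, hS, rfl⟩
  exact hle S hS

end SteinerPacking

lemma exists_forall_fst_ne_of_ncard_lt {α β : Type*} {S : Set (α × β)} (hfin : S.Finite)
    (hS : S.ncard < Nat.card α) : ∃ a : α, ∀ s ∈ S, s.1 ≠ a := by
  by_contra! h
  have himage : Prod.fst '' S = Set.univ :=
    Set.eq_univ_of_forall fun a => let ⟨s, hs, hsa⟩ := h a; ⟨s, hs, hsa⟩
  have := Set.ncard_image_le (f := Prod.fst) hfin
  rw [himage, Set.ncard_univ] at this
  omega

section LexProdPathGraph

variable {n : ℕ} {W : Type*}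

lemma lexProd_pathGraph_adj_fst_le {H : SimpleGraph W} {u v : Fin n × W}
    (h : (lexProd (pathGraph n) H).Adj u v) : (v.1 : ℕ) ≤ u.1 + 1 := by
  rcases h with h | ⟨h, -⟩
  · rw [pathGraph_adj] at h
    omega
  · rw [h]
    omega

lemma steinerConn_lexProd_pathGraph_le (H : SimpleGraph W) [Finite W] {S : Set (Fin n × W)}
    (c : Fin n) (hS : ∀ s ∈ S, s.1 ≠ c) {x y : Fin n × W} (hx : x ∈ S) (hy : y ∈ S) (hxc : x.1 < c)
    (hcy : c < y.1) : steinerConn (lexProd (pathGraph n) H) S ≤ Nat.card W := by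
  have hcol : ({c} ×ˢ Set.univ : Set (Fin n × W)).ncard = Nat.card W := by
    rw [Set.ncard_prod, Set.ncard_singleton, Set.ncard_univ, one_mul]
  rw [← hcol]
  refine steinerConn_le_ncard (Set.toFinite _)
    (Set.disjoint_left.mpr fun s hs hsc => hS s hs hsc.1) fun T hT => ?_
  obtain ⟨p⟩ := hT.1.connected.preconnected ⟨x, hT.2 hx⟩ ⟨y, hT.2 hy⟩
  obtain ⟨z, hz, hzc⟩ := (p.map T.hom).exists_mem_support_eq_of_adj_le_succ
    (f := fun z => (z.1 : ℕ)) (fun _ _ => lexProd_pathGraph_adj_fst_le) hxc.le hcy.le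
  rw [Walk.support_map, List.mem_map] at hz
  obtain ⟨z', -, rfl⟩ := hz
  exact ⟨z', z'.2, Fin.ext hzc, trivial⟩

def stepToward (c i : Fin n) : Fin n :=
  if _ : (i : ℕ) < c then ⟨i + 1, by have := c.isLt; omega⟩
  else ⟨i - 1, by have := i.isLt; omega⟩

lemma stepToward_val (c i : Fin n) :
    (stepToward c i : ℕ) = if (i : ℕ) < c then (i : ℕ) + 1 else i - 1 := by
  unfold stepToward
  split_ifs <;> rfl

lemma pathGraph_adj_stepToward {c i : Fin n} (h : i ≠ c) :
    (pathGraph n).Adj i (stepToward c i) := by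
  have := Fin.val_ne_of_ne h
  rw [pathGraph_adj, stepToward_val]
  split_ifs <;> omega

lemma dist_stepToward_lt {c i : Fin n} (h : i ≠ c) :
    Nat.dist (stepToward c i) c < Nat.dist i c := by
  have := Fin.val_ne_of_ne h
  unfold Nat.dist
  rw [stepToward_val]
  split_ifs <;> omega

lemma stepToward_stepToward_ne {c i : Fin n} (hi : i ≠ c) (hstep : stepToward c i ≠ c) :
    stepToward c (stepToward c i) ≠ i := by
  have := Fin.val_ne_of_ne hi
  have := Fin.val_ne_of_ne hstep
  intro h
  have := congrArg Fin.val h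
  rw [stepToward_val, stepToward_val] at *
  split_ifs at * <;> omega

end LexProdPathGraph

section RowTree

variable {n : ℕ} {W : Type*} (H : SimpleGraph W) (c : Fin n) (S : Set (Fin n × W))

def rowTree (w : W) : (lexProd (pathGraph n) H).Subgraph where
  verts := {x | x.2 = w} ∪ S
  Adj x y := ((x.2 = w ∨ x ∈ S) ∧ x.1 ≠ c ∧ y = (stepToward c x.1, w)) ∨
    ((y.2 = w ∨ y ∈ S) ∧ y.1 ≠ c ∧ x = (stepToward c y.1, w))
  adj_sub := by
    rintro x y (⟨-, hxc, rfl⟩ | ⟨-, hyc, rfl⟩)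
    · exact Or.inl (pathGraph_adj_stepToward hxc)
    · exact Or.inl (pathGraph_adj_stepToward hyc).symm
  edge_vert := by
    rintro x y (⟨hx, -, -⟩ | ⟨-, -, rfl⟩)
    · exact hx
    · exact Or.inl rfl
  symm := ⟨fun _ _ => Or.symm⟩

variable {H c S}

lemma rowTree_isTree (hS : ∀ s ∈ S, s.1 ≠ c) (w : W) : (rowTree H c S w).coe.IsTree := by
  let root : (rowTree H c S w).verts := ⟨(c, w), Or.inl rfl⟩
  have col_ne : ∀ x : (rowTree H c S w).verts, x ≠ root → x.1.1 ≠ c := by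
    rintro ⟨x, hx | hx⟩ hroot hxc
    · exact hroot (Subtype.ext (Prod.ext hxc hx))
    · exact hS x hx hxc
  refine isTree_of_parent root (fun x => ⟨(stepToward c x.1.1, w), Or.inl rfl⟩)
    (fun x => Nat.dist x.1.1 c) (fun x hx => Or.inl ⟨x.2, col_ne x hx, rfl⟩)
    (fun x hx => dist_stepToward_lt (col_ne x hx)) ?_
  rintro x y (⟨-, hxc, hy⟩ | ⟨-, hyc, hx⟩)
  · exact Or.inl ⟨fun h => hxc (congrArg (·.1.1) h), Subtype.ext hy⟩
  · exact Or.inr ⟨fun h => hyc (congrArg (·.1.1) h), Subtype.ext hx⟩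

lemma rowTree_verts_inter {w w' : W} (hw : w ≠ w') :
    (rowTree H c S w).verts ∩ (rowTree H c S w').verts = S := by
  ext x
  simp only [rowTree, Set.mem_inter_iff, Set.mem_union, Set.mem_ofPred_eq]
  constructor
  · rintro ⟨hx | hx, hx' | hx'⟩
    exacts [absurd (hx.symm.trans hx') hw, hx', hx, hx]
  · exact fun hx => ⟨Or.inr hx, Or.inr hx⟩

/-- Two edges of distinct row trees could only coincide if two columns outside `c` each stepped
towards `c` onto the other. -/
lemma rowTree_not_adj_and_adj {w w' : W} (hw : w ≠ w') (x y : Fin n × W) :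
    ¬ ((rowTree H c S w).Adj x y ∧ (rowTree H c S w').Adj x y) := by
  rintro ⟨⟨-, hxc, rfl⟩ | ⟨-, hyc, rfl⟩, ⟨-, hxc', hy⟩ | ⟨-, hyc', hx⟩⟩
  · exact hw (congrArg Prod.snd hy)
  · exact stepToward_stepToward_ne hxc hyc' (congrArg Prod.fst hx).symm
  · exact stepToward_stepToward_ne hyc hxc' (congrArg Prod.fst hy).symm
  · exact hw (congrArg Prod.snd hx)

theorem isSteinerPacking_rowTree (hS : ∀ s ∈ S, s.1 ≠ c) :
    IsSteinerPacking (lexProd (pathGraph n) H) S (rowTree H c S) :=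
  ⟨fun w => ⟨rowTree_isTree hS w, Set.subset_union_right⟩,
    fun _ _ hw => ⟨rowTree_verts_inter hw, rowTree_not_adj_and_adj hw⟩⟩

end RowTree

/-- `κ₃(P_n ∘ P₃) = 3` for `n ≥ 4`. -/
theorem genConn_three_path_lexProd_path (n : ℕ) (hn : 4 ≤ n) :
    genConn (lexProd (pathGraph n) (pathGraph 3)) 3 = 3 := by
  refine genConn_eq_of_le_steinerConn (fun S hS => ?_)
    (S₀ := {(⟨0, by omega⟩, 0), (⟨0, by omega⟩, 1), (⟨2, by omega⟩, 0)}) ?_ ?_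
  · obtain ⟨c, hc⟩ := exists_forall_fst_ne_of_ncard_lt S.toFinite (by rw [Nat.card_fin]; omega)
    exact (isSteinerPacking_rowTree hc).le_steinerConn
      (Set.one_lt_ncard_iff_nontrivial.mp (by omega))
  · exact Set.ncard_eq_three.mpr ⟨_, _, _, by simp, by simp, by simp, rfl⟩
  · refine (steinerConn_lexProd_pathGraph_le _ ⟨1, by omega⟩ ?_ (x := (⟨0, by omega⟩, 0))
      (y := (⟨2, by omega⟩, 0)) (by simp) (by simp) (by simp [Fin.lt_def])
      (by simp [Fin.lt_def])).trans_eq (Nat.card_fin 3)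
    simp [Fin.ext_iff]
end
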